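/- arXiv:2403.04630 — 2 statements merged into one kernel-verified Lean document; each statement's English description precedes it below -/
import Mathlib

section
/- Let ε > 0, c ∈ ℕ with c ≥ 1, τ ∈ ℝ, T ∈ ℕ, and q_1, ..., q_T ∈ ℝ. Let Z, Z_1, ..., Z_T be independent real random variables, where Z has the Laplace distribution with scale 2/ε and each Z_t has the Laplace distribution with scale 4c/ε. Fix t' ∈ [T]. If x ≤ 0 and q_t ≤ x + τ for all t ≤ t', then P(for all t ≤ t', q_t + Z_t < τ + Z) ≥ 1 − T·exp(x·ε/(8c)). (When this event occurs, the sparse vector mechanism with threshold τ, privacy parameter ε, and cutoff c outputs ⊤ at every time step t ≤ t'.) -/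
open MeasureTheory

/-- The Laplace distribution with scale `b`: the measure on `ℝ` with density
`(1/(2b))·e^{−|z|/b}` with respect to Lebesgue measure. -/
noncomputable def laplace (b : ℝ) : Measure ℝ :=
  (volume : Measure ℝ).withDensity
    (fun z => ENNReal.ofReal ((1 / (2 * b)) * Real.exp (-|z| / b)))

instance (b : ℝ) : SigmaFinite (laplace b) := by
  unfold laplace
  infer_instance

/-! The event contains the product event `{Z ≥ x/2} × {Z_t < -x/2 for all t}`. By independence
and the Laplace tail `P(Z ≤ a) = e^{a/b}/2` for `a ≤ 0` (and symmetry), its probability is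
`(1 - e₁/2)(1 - e₂/2)^T` with `e₁ = e^{xε/4} ≤ e₂ = e^{xε/(8c)}`, and Bernoulli's inequality
bounds this from below by `1 - T e₂`. -/

open Set

lemma laplace_Iic {b : ℝ} (hb : 0 < b) {a : ℝ} (ha : a ≤ 0) :
    laplace b (Iic a) = ENNReal.ofReal (Real.exp (a / b) / 2) := by
  have hint : IntegrableOn (fun z => (1 / (2 * b)) * Real.exp (b⁻¹ * z)) (Iic a) :=
    (integrableOn_exp_mul_Iic (inv_pos.2 hb) a).const_mul _
  rw [laplace, withDensity_apply _ measurableSet_Iic,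
    setLIntegral_congr_fun measurableSet_Iic fun z hz => by
      rw [abs_of_nonpos (hz.trans ha), neg_neg, div_eq_inv_mul z],
    ← ofReal_integral_eq_lintegral_ofReal hint (.of_forall fun z => by positivity),
    integral_const_mul, integral_exp_mul_Iic (inv_pos.2 hb)]
  congr 1
  field_simp

lemma laplace_preimage_neg (b : ℝ) {s : Set ℝ} (hs : MeasurableSet s) :
    laplace b (Neg.neg ⁻¹' s) = laplace b s := by
  have hf : Measurable fun z : ℝ => ENNReal.ofReal ((1 / (2 * b)) * Real.exp (-|z| / b)) :=
    by fun_prop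
  rw [laplace, withDensity_apply _ hs, withDensity_apply _ (measurable_neg hs),
    ← (Measure.measurePreserving_neg volume).setLIntegral_comp_preimage hs hf]
  simp

instance (b : ℝ) : NullSingletonClass (laplace b) := by
  unfold laplace
  infer_instance

lemma laplace_Ioi {b : ℝ} (hb : 0 < b) {a : ℝ} (ha : 0 ≤ a) :
    laplace b (Ioi a) = ENNReal.ofReal (Real.exp (-a / b) / 2) := by
  rw [← laplace_preimage_neg b measurableSet_Ioi, neg_preimage, neg_Ioi,
    measure_congr Iio_ae_eq_Iic, laplace_Iic hb (neg_nonpos.2 ha)]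

lemma isProbabilityMeasure_laplace {b : ℝ} (hb : 0 < b) :
    IsProbabilityMeasure (laplace b) where
  measure_univ := by
    rw [← Iic_union_Ioi (a := (0 : ℝ)), measure_union (Iic_disjoint_Ioi le_rfl) measurableSet_Ioi,
      laplace_Iic hb le_rfl, laplace_Ioi hb le_rfl,
      ← ENNReal.ofReal_add (by positivity) (by positivity)]
    norm_num

lemma laplace_Ici_of_nonpos {b : ℝ} (hb : 0 < b) {a : ℝ} (ha : a ≤ 0) :
    laplace b (Ici a) = ENNReal.ofReal (1 - Real.exp (a / b) / 2) := by
  have := isProbabilityMeasure_laplace hb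
  rw [← compl_Iio, prob_compl_eq_one_sub measurableSet_Iio, measure_congr Iio_ae_eq_Iic,
    laplace_Iic hb ha, ← ENNReal.ofReal_one, ← ENNReal.ofReal_sub _ (by positivity)]

lemma laplace_Iio_neg_of_nonpos {b : ℝ} (hb : 0 < b) {a : ℝ} (ha : a ≤ 0) :
    laplace b (Iio (-a)) = ENNReal.ofReal (1 - Real.exp (a / b) / 2) := by
  rw [← laplace_preimage_neg b measurableSet_Iio, neg_preimage, neg_Iio, neg_neg,
    measure_congr Ioi_ae_eq_Ici, laplace_Ici_of_nonpos hb ha]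

lemma one_sub_two_mul_le_one_sub_mul_one_sub_pow {a b : ℝ} {n : ℕ} (hn : 1 ≤ n) (ha : 0 ≤ a)
    (hab : a ≤ b) (hb : b ≤ 1) : 1 - 2 * n * b ≤ (1 - a) * (1 - b) ^ n := by
  have hn' : (1 : ℝ) ≤ n := by exact_mod_cast hn
  have bernoulli : 1 - n * b ≤ (1 - b) ^ n := by
    simpa [sub_eq_add_neg] using one_add_mul_le_pow (a := -b) (by linarith) n
  calc 1 - 2 * n * b ≤ (1 - a) * (1 - n * b) := by
        nlinarith [mul_nonneg (mul_nonneg ha (by linarith : (0 : ℝ) ≤ n)) (ha.trans hab),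
          mul_nonneg (sub_nonneg.2 hn') (ha.trans hab)]
    _ ≤ (1 - a) * (1 - b) ^ n := mul_le_mul_of_nonneg_left bernoulli (by linarith)

lemma laplace_prod_pi_Ici_prod_Iio {b₁ b₂ : ℝ} (hb₁ : 0 < b₁) (hb₂ : 0 < b₂) {ι : Type*}
    [Fintype ι] {a : ℝ} (ha : a ≤ 0) :
    ((laplace b₁).prod (Measure.pi fun _ : ι => laplace b₂)) (Ici a ×ˢ univ.pi fun _ => Iio (-a))
      = ENNReal.ofReal
          ((1 - Real.exp (a / b₁) / 2) * (1 - Real.exp (a / b₂) / 2) ^ Fintype.card ι) := by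
  have h₁ : 0 ≤ 1 - Real.exp (a / b₁) / 2 := by
    linarith [Real.exp_le_one_iff.2 (div_nonpos_of_nonpos_of_nonneg ha hb₁.le)]
  have h₂ : 0 ≤ 1 - Real.exp (a / b₂) / 2 := by
    linarith [Real.exp_le_one_iff.2 (div_nonpos_of_nonpos_of_nonneg ha hb₂.le)]
  rw [Measure.prod_prod, Measure.pi_pi, laplace_Ici_of_nonpos hb₁ ha,
    laplace_Iio_neg_of_nonpos hb₂ ha, Finset.prod_const, Finset.card_univ,
    ENNReal.ofReal_mul h₁, ENNReal.ofReal_pow h₂]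

lemma exp_div_le_exp_div_of_nonpos {x b₁ b₂ : ℝ} (hx : x ≤ 0) (hb₁ : 0 < b₁) (hb₁₂ : b₁ ≤ b₂) :
    Real.exp (x / b₁) ≤ Real.exp (x / b₂) :=
  Real.exp_le_exp.2 <| by
    simpa only [div_eq_mul_inv x] using mul_le_mul_of_nonpos_left (inv_anti₀ hb₁ hb₁₂) hx

lemma Ici_prod_pi_Iio_subset_forall_lt {T : ℕ} {q : Fin T → ℝ} {x τ : ℝ} {t' : Fin T}
    (hq : ∀ t : Fin T, t ≤ t' → q t ≤ x + τ) :
    Ici (x / 2) ×ˢ univ.pi (fun _ : Fin T => Iio (-(x / 2)))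
      ⊆ {p : ℝ × (Fin T → ℝ) | ∀ t : Fin T, t ≤ t' → q t + p.2 t < τ + p.1} := by
  rintro ⟨z, w⟩ ⟨hz, hw⟩ t ht
  have hwt := hw t (mem_univ t)
  simp only [mem_Ici, mem_Iio] at hz hwt
  linarith [hq t ht]

/-- the sparse vector mechanism outputs `⊤` while the answers are far
below the threshold.
Let `Z ~ Laplace(2/ε)` and `Z_1, …, Z_T ~ Laplace(4c/ε)` be independent (modelled by a
product measure with first coordinate `Z` and second coordinate the vector of the
`Z_t`).  Fix `t' ∈ [T]`.  If `x ≤ 0` and `q_t ≤ x + τ` for all `t ≤ t'`, then the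
probability that `q_t + Z_t < τ + Z` for all `t ≤ t'` is at least
`1 − T·exp(xε/(8c))`.  (When this event occurs, the sparse vector mechanism with
threshold `τ`, privacy parameter `ε`, and cutoff `c` outputs `⊤` at every time step
`t ≤ t'`.) -/
theorem svt_outputs_top_when_below_threshold (ε : ℝ) (hε : 0 < ε) (c : ℕ) (hc : 1 ≤ c)
    (τ : ℝ) (T : ℕ) (q : Fin T → ℝ) (x : ℝ) (hx : x ≤ 0)
    (t' : Fin T) (hq : ∀ t : Fin T, t ≤ t' → q t ≤ x + τ) :
    ENNReal.ofReal (1 - T * Real.exp (x * ε / (8 * c)))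
      ≤ ((laplace (2 / ε)).prod (Measure.pi fun _ : Fin T => laplace (4 * c / ε)))
          {p : ℝ × (Fin T → ℝ) | ∀ t : Fin T, t ≤ t' → q t + p.2 t < τ + p.1} := by
  have hb₁ : 0 < 2 / ε := by positivity
  have hb₂ : 0 < 4 * c / ε := by positivity
  have hb₁₂ : 2 / ε ≤ 4 * c / ε :=
    div_le_div_of_nonneg_right (by linarith [(Nat.one_le_cast (α := ℝ)).2 hc]) hε.le
  have hx₂ : x / 2 ≤ 0 := by linarith
  have he₁₂ := exp_div_le_exp_div_of_nonpos hx₂ hb₁ hb₁₂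
  have he₂_le := Real.exp_le_one_iff.2 (div_nonpos_of_nonpos_of_nonneg hx₂ hb₂.le)
  set e₁ := Real.exp (x / 2 / (2 / ε))
  set e₂ := Real.exp (x / 2 / (4 * c / ε))
  have he₂ : Real.exp (x * ε / (8 * c)) = e₂ := by congr 1; field_simp; ring
  calc ENNReal.ofReal (1 - T * Real.exp (x * ε / (8 * c)))
      ≤ ENNReal.ofReal ((1 - e₁ / 2) * (1 - e₂ / 2) ^ T) := by
        refine ENNReal.ofReal_le_ofReal ?_
        convert one_sub_two_mul_le_one_sub_mul_one_sub_pow (a := e₁ / 2) (b := e₂ / 2) t'.pos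
          (by positivity) (by linarith) (by linarith) using 1
        rw [he₂]; ring
    _ = _ := by rw [laplace_prod_pi_Ici_prod_Iio hb₁ hb₂ hx₂, Fintype.card_fin]
    _ ≤ _ := measure_mono (Ici_prod_pi_Iio_subset_forall_lt hq)
end

section
/- (Incremental edge-sensitivity of triangle counts.) Let D ∈ ℕ and let f_triangles(S)_t denote the number of triangles in flat(S_[t]). For every T ∈ ℕ and every pair of edge-neighboring insertion-only graph streams S, S' of length T whose flattened graphs flat(S_[T]) and flat(S'_[T]) have maximum degree at most D, the ℓ1 distance between the increment sequences satisfies Σ_{t=1}^{T} |inc_{f_triangles}(S)_t − inc_{f_triangles}(S')_t| ≤ D − 1; moreover, this bound is attained, even by a pair of such streams of length T = 1. -/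
open Finset

/-- A finite graph: a finite vertex set together with a finite set of undirected edges. -/
structure FinGraph where
  verts : Finset ℕ
  edges : Finset (Sym2 ℕ)

namespace FinGraph

/-- A finite graph is valid if every edge is a non-loop both of whose endpoints are vertices. -/
def Valid (G : FinGraph) : Prop :=
  ∀ e ∈ G.edges, ¬ e.IsDiag ∧ ∀ v ∈ e, v ∈ G.verts

/-- The degree of a vertex: the number of edges containing it. -/
def degree (G : FinGraph) (v : ℕ) : ℕ :=
  (G.edges.filter (fun e => v ∈ e)).card

/-- Remove a node and all of its adjacent edges. -/
def removeNode (G : FinGraph) (v : ℕ) : FinGraph :=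
  ⟨G.verts.erase v, G.edges.filter (fun e => v ∉ e)⟩

/-- Remove a single edge. -/
def removeEdge (G : FinGraph) (e : Sym2 ℕ) : FinGraph :=
  ⟨G.verts, G.edges.erase e⟩

/-- `G` is `(D, ℓ)`-bounded: it has at most `ℓ` nodes of degree greater than `D`. -/
def DLBounded (G : FinGraph) (D ℓ : ℕ) : Prop :=
  (G.verts.filter (fun v => D < G.degree v)).card ≤ ℓ

end FinGraph

/-- One graph is obtained from the other by removing one node and all of its adjacent edges. -/
def nodeNeighborGraph (G G' : FinGraph) : Prop :=
  (∃ v ∈ G.verts, G' = G.removeNode v) ∨ (∃ v ∈ G'.verts, G = G'.removeNode v)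

/-- `G'` is obtained from `G` by removing a single edge, an isolated node,
or a degree-one node together with its adjacent edge. -/
def edgeRemovalGraph (G G' : FinGraph) : Prop :=
  (∃ e ∈ G.edges, G' = G.removeEdge e) ∨
  (∃ v ∈ G.verts, G.degree v = 0 ∧ G' = FinGraph.mk (G.verts.erase v) G.edges) ∨
  (∃ v ∈ G.verts, G.degree v = 1 ∧ G' = G.removeNode v)

/-- Edge-neighboring graphs. -/
def edgeNeighborGraph (G G' : FinGraph) : Prop :=
  edgeRemovalGraph G G' ∨ edgeRemovalGraph G' G

/-- The length of a shortest chain of valid graphs from `A` to `B` in which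
consecutive graphs are related by `R`. -/
noncomputable def graphChainDist (R : FinGraph → FinGraph → Prop) (A B : FinGraph) : ℕ :=
  sInf {n | ∃ f : ℕ → FinGraph, f 0 = A ∧ f n = B ∧ (∀ i ≤ n, (f i).Valid) ∧
    ∀ i < n, R (f i) (f (i + 1))}

/-- Node distance between finite graphs. -/
noncomputable def graphNodeDist : FinGraph → FinGraph → ℕ := graphChainDist nodeNeighborGraph

/-- Edge distance between finite graphs. -/
noncomputable def graphEdgeDist : FinGraph → FinGraph → ℕ := graphChainDist edgeNeighborGraph

/-- An insertion-only graph stream: the nodes and edges arriving at each time step. -/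
structure GraphStream where
  nodes : ℕ → Finset ℕ
  edges : ℕ → Finset (Sym2 ℕ)

namespace GraphStream

/-- Validity of a graph stream of length `T`: arrivals happen only at times `1, …, T`,
no node or edge arrives twice, and every edge is a non-loop whose endpoints
arrive at or before the edge does. -/
def Valid (T : ℕ) (S : GraphStream) : Prop :=
  (∀ t, ((S.nodes t).Nonempty ∨ (S.edges t).Nonempty) → 1 ≤ t ∧ t ≤ T) ∧
  (∀ s t, s ≠ t → Disjoint (S.nodes s) (S.nodes t)) ∧
  (∀ s t, s ≠ t → Disjoint (S.edges s) (S.edges t)) ∧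
  (∀ t, ∀ e ∈ S.edges t, ¬ e.IsDiag ∧ ∀ v ∈ e, ∃ s ≤ t, v ∈ S.nodes s)

/-- The flattened graph of the stream through time `t`. -/
def flat (S : GraphStream) (t : ℕ) : FinGraph :=
  ⟨(Finset.range (t + 1)).biUnion S.nodes, (Finset.range (t + 1)).biUnion S.edges⟩

/-- Remove a node and all of its adjacent edges from a stream. -/
def removeNode (S : GraphStream) (v : ℕ) : GraphStream :=
  ⟨fun t => (S.nodes t).erase v, fun t => (S.edges t).filter (fun e => v ∉ e)⟩

/-- Remove a single edge from a stream. -/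
def removeEdge (S : GraphStream) (e : Sym2 ℕ) : GraphStream :=
  ⟨S.nodes, fun t => (S.edges t).erase e⟩

/-- Truncation of a stream: keep only arrivals at times `≤ t`. -/
def trunc (S : GraphStream) (t : ℕ) : GraphStream :=
  ⟨fun s => if s ≤ t then S.nodes s else ∅, fun s => if s ≤ t then S.edges s else ∅⟩

/-- `v` arrives at some point in the stream. -/
def hasNode (S : GraphStream) (v : ℕ) : Prop :=
  ∃ t, v ∈ S.nodes t

/-- The stream is `(D, ℓ)`-bounded through time `t`. -/
def DLBoundedThrough (S : GraphStream) (D ℓ t : ℕ) : Prop :=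
  (S.flat t).DLBounded D ℓ

end GraphStream

/-- `S'` is obtained from `S` by removing one node and all of its adjacent edges
(which may arrive at many time steps). -/
def nodeRemovalStream (S S' : GraphStream) : Prop :=
  ∃ v, S.hasNode v ∧ S' = S.removeNode v

/-- Node-neighboring streams. -/
def nodeNeighborStream (S S' : GraphStream) : Prop :=
  nodeRemovalStream S S' ∨ nodeRemovalStream S' S

/-- `S'` is obtained from the length-`T` stream `S` by removing a single edge,
an isolated node, or a degree-one node together with its adjacent edge. -/
def edgeRemovalStream (T : ℕ) (S S' : GraphStream) : Prop :=
  (∃ t, ∃ e ∈ S.edges t, S' = S.removeEdge e) ∨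
  (∃ v, S.hasNode v ∧ (S.flat T).degree v ≤ 1 ∧ S' = S.removeNode v)

/-- Edge-neighboring streams (of length `T`). -/
def edgeNeighborStream (T : ℕ) (S S' : GraphStream) : Prop :=
  edgeRemovalStream T S S' ∨ edgeRemovalStream T S' S

/-- Length of a shortest chain of valid streams of length `T` in which consecutive
streams are related by `R`. -/
noncomputable def streamChainDist (T : ℕ) (R : GraphStream → GraphStream → Prop)
    (A B : GraphStream) : ℕ :=
  sInf {n | ∃ f : ℕ → GraphStream, f 0 = A ∧ f n = B ∧ (∀ i ≤ n, (f i).Valid T) ∧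
    ∀ i < n, R (f i) (f (i + 1))}

/-- Node distance between streams of length `T`. -/
noncomputable def streamNodeDist (T : ℕ) : GraphStream → GraphStream → ℕ :=
  streamChainDist T nodeNeighborStream

/-- Edge distance between streams of length `T`. -/
noncomputable def streamEdgeDist (T : ℕ) : GraphStream → GraphStream → ℕ :=
  streamChainDist T (edgeNeighborStream T)

/-- A fixed injective key on undirected edges, providing the consistent total order in
which edges arriving at the same time step are processed. -/
def edgeKey : Sym2 ℕ → ℕ :=
  Sym2.lift ⟨fun a b => Nat.pair (min a b) (max a b), fun a b => by
    dsimp only; rw [inf_comm, sup_comm]⟩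

/-- The two endpoints of an edge, as an ordered pair. -/
def endpointsOf (e : Sym2 ℕ) : ℕ × ℕ := (edgeKey e).unpair

/-- The edges of a finite edge set, listed in increasing `edgeKey` order. -/
def sortEdges (E : Finset (Sym2 ℕ)) : List (Sym2 ℕ) :=
  ((E.image edgeKey).sort (· ≤ ·)).map fun k => s(k.unpair.1, k.unpair.2)

/-- All edges of a stream of length `T`, tagged with their arrival times, in processing
order: lexicographically by (arrival time, consistent edge order). -/
def GraphStream.procList (S : GraphStream) (T : ℕ) : List (ℕ × Sym2 ℕ) :=
  (List.range (T + 1)).flatMap fun t => (sortEdges (S.edges t)).map fun e => (t, e)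

/-- One step of the greedy projection with degree bound `D`.  The state consists of the
degree counters together with the edges kept so far (indexed by arrival time).
If `bbds = true` the counters of the endpoints are incremented for every processed edge
(the BBDS rule); if `bbds = false` they are incremented only when the edge is kept
(the DLL rule). -/
def projStep (D : ℕ) (bbds : Bool) (st : (ℕ → ℕ) × (ℕ → Finset (Sym2 ℕ)))
    (p : ℕ × Sym2 ℕ) : (ℕ → ℕ) × (ℕ → Finset (Sym2 ℕ)) :=
  let d := st.1
  let u := (endpointsOf p.2).1
  let v := (endpointsOf p.2).2
  let keep : Bool := decide (d u < D ∧ d v < D)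
  ((if bbds || keep then fun w => if w = u ∨ w = v then d w + 1 else d w else d),
   (if keep then fun s => if s = p.1 then insert p.2 (st.2 s) else st.2 s else st.2))

/-- The time-aware projection with degree bound `D` on streams of length `T`:
the BBDS projection if `bbds = true` and the DLL projection if `bbds = false`.
All arriving nodes are kept; an arriving edge is kept (at its arrival time) iff both of
its endpoints have counter value `< D` when the edge is processed. -/
def project (bbds : Bool) (D T : ℕ) (S : GraphStream) : GraphStream :=
  ⟨S.nodes,
   ((S.procList T).foldl (projStep D bbds)
      ((fun _ => 0 : ℕ → ℕ), (fun _ => ∅ : ℕ → Finset (Sym2 ℕ)))).2⟩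

/-- The BBDS projection `Π^BBDS_D` on streams of length `T`. -/
def projBBDS (D T : ℕ) : GraphStream → GraphStream := project true D T

/-- The DLL projection `Π^DLL_D` on streams of length `T`. -/
def projDLL (D T : ℕ) : GraphStream → GraphStream := project false D T

open Classical in
/-- The number of triangles of a finite graph: the number of three-element sets of
vertices that are mutually adjacent. -/
noncomputable def FinGraph.triangleCount (G : FinGraph) : ℕ :=
  ((G.verts.powersetCard 3).filter
    fun s => ∀ u ∈ s, ∀ v ∈ s, u ≠ v → s(u, v) ∈ G.edges).card

/-!
Deleting an edge `ab` destroys exactly the triangles through `ab`, which correspond to the common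
neighbours of `a` and `b`. In an insertion-only stream their number can only grow, so the
differences of the increments telescope to the number of triangles through `ab` at the end,
which is at most `deg a - 1 ≤ D - 1`. Deleting a node of degree at most one destroys no triangle.
The bound is attained by revealing at once the book graph: the edge `01` together with `D - 1`
pages `i` adjacent to both `0` and `1`.
-/

namespace FinGraph

variable (G : FinGraph) (a b : ℕ)

def triangles : Finset (Finset ℕ) :=
  (G.verts.powersetCard 3).filter fun s => ∀ u ∈ s, ∀ v ∈ s, u ≠ v → s(u, v) ∈ G.edges

def trianglesThrough : Finset (Finset ℕ) :=
  G.triangles.filter fun s => a ∈ s ∧ b ∈ s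

def commonNeighbors : Finset ℕ :=
  G.verts.filter fun w => w ≠ a ∧ w ≠ b ∧ s(a, w) ∈ G.edges ∧ s(b, w) ∈ G.edges

variable {G a b}

theorem triangleCount_eq_card_triangles : G.triangleCount = G.triangles.card := by
  unfold triangleCount triangles
  congr

theorem mem_triangles {s : Finset ℕ} :
    s ∈ G.triangles ↔
      s ⊆ G.verts ∧ s.card = 3 ∧ ∀ u ∈ s, ∀ v ∈ s, u ≠ v → s(u, v) ∈ G.edges := by
  simp [triangles, mem_powersetCard, and_assoc]

theorem triangles_mono {H : FinGraph} (hV : G.verts ⊆ H.verts) (hE : G.edges ⊆ H.edges) :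
    G.triangles ⊆ H.triangles := fun s hs => by
  obtain ⟨hsV, hcard, hadj⟩ := mem_triangles.1 hs
  exact mem_triangles.2 ⟨hsV.trans hV, hcard, fun u hu v hv huv => hE (hadj u hu v hv huv)⟩

theorem trianglesThrough_mono {H : FinGraph} (hV : G.verts ⊆ H.verts)
    (hE : G.edges ⊆ H.edges) : G.trianglesThrough a b ⊆ H.trianglesThrough a b :=
  filter_subset_filter _ (triangles_mono hV hE)

theorem degree_mono {H : FinGraph} (hE : G.edges ⊆ H.edges) (v : ℕ) :
    G.degree v ≤ H.degree v :=
  card_le_card (filter_subset_filter _ hE)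

theorem triangles_removeEdge (hab : a ≠ b) :
    (G.removeEdge s(a, b)).triangles = G.triangles.filter fun s => ¬ (a ∈ s ∧ b ∈ s) := by
  ext s
  simp only [mem_filter, mem_triangles, removeEdge, mem_erase]
  constructor
  · rintro ⟨hsV, hcard, hadj⟩
    refine ⟨⟨hsV, hcard, fun u hu v hv huv => (hadj u hu v hv huv).2⟩, ?_⟩
    rintro ⟨ha, hb⟩
    exact (hadj a ha b hb hab).1 rfl
  · rintro ⟨⟨hsV, hcard, hadj⟩, hab_notin⟩
    refine ⟨hsV, hcard, fun u hu v hv huv => ⟨fun huv_eq => hab_notin ?_, hadj u hu v hv huv⟩⟩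
    rcases Sym2.eq_iff.1 huv_eq with ⟨rfl, rfl⟩ | ⟨rfl, rfl⟩
    exacts [⟨hu, hv⟩, ⟨hv, hu⟩]

theorem triangleCount_eq_removeEdge_add (hab : a ≠ b) :
    G.triangleCount = (G.removeEdge s(a, b)).triangleCount + (G.trianglesThrough a b).card := by
  rw [triangleCount_eq_card_triangles, triangleCount_eq_card_triangles,
    triangles_removeEdge hab, trianglesThrough, add_comm]
  exact (card_filter_add_card_filter_not _).symm

theorem trianglesThrough_eq_image (hab : a ≠ b) (ha : a ∈ G.verts) (hb : b ∈ G.verts)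
    (he : s(a, b) ∈ G.edges) :
    G.trianglesThrough a b = (G.commonNeighbors a b).image fun w => {a, b, w} := by
  ext s
  simp only [trianglesThrough, commonNeighbors, mem_filter, mem_image, mem_triangles]
  constructor
  · rintro ⟨⟨hsV, hcard, hadj⟩, has, hbs⟩
    have hbs' : b ∈ s.erase a := mem_erase.2 ⟨hab.symm, hbs⟩
    obtain ⟨w, hw⟩ : ∃ w, (s.erase a).erase b = {w} := by
      rw [← card_eq_one, card_erase_of_mem hbs', card_erase_of_mem has, hcard]
    have hws : w ∈ (s.erase a).erase b := hw ▸ mem_singleton_self w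
    simp only [mem_erase] at hws
    obtain ⟨hwb, hwa, hws⟩ := hws
    refine ⟨w, ⟨hsV hws, hwa, hwb, hadj a has w hws hwa.symm, hadj b hbs w hws hwb.symm⟩, ?_⟩
    rw [← hw, insert_erase hbs', insert_erase has]
  · rintro ⟨w, ⟨hwV, hwa, hwb, haw, hbw⟩, rfl⟩
    refine ⟨⟨?_, ?_, ?_⟩, by simp, by simp⟩
    · simp [insert_subset_iff, ha, hb, hwV]
    · rw [card_insert_of_notMem (by simp [hab, hwa.symm]),
        card_insert_of_notMem (by simp [hwb.symm]), card_singleton]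
    · simp only [mem_insert, mem_singleton]
      rintro u (rfl | rfl | rfl) v (rfl | rfl | rfl) huv <;>
        first
          | exact absurd rfl huv
          | assumption
          | (rw [Sym2.eq_swap]; assumption)

theorem card_trianglesThrough (hab : a ≠ b) (ha : a ∈ G.verts) (hb : b ∈ G.verts)
    (he : s(a, b) ∈ G.edges) :
    (G.trianglesThrough a b).card = (G.commonNeighbors a b).card := by
  rw [trianglesThrough_eq_image hab ha hb he]
  refine card_image_of_injOn fun w hw w' hw' hww' => ?_
  simp only [coe_filter, commonNeighbors, Set.mem_ofPred_eq] at hw hw'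
  have : w ∈ ({a, b, w'} : Finset ℕ) := by simp [← hww']
  simpa [hw.2.1, hw.2.2.1] using this

theorem card_commonNeighbors_add_one_le_degree (he : s(a, b) ∈ G.edges) :
    (G.commonNeighbors a b).card + 1 ≤ G.degree a := by
  have hmem : s(a, b) ∈ G.edges.filter (a ∈ ·) := mem_filter.2 ⟨he, Sym2.mem_mk_left a b⟩
  rw [degree, ← card_erase_add_one hmem, add_le_add_iff_right]
  refine card_le_card_of_injOn (fun w => s(a, w)) (fun w hw => ?_)
    (fun w _ w' _ h => Sym2.congr_right.1 h)
  simp only [commonNeighbors, coe_filter, Set.mem_ofPred_eq] at hw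
  simp [hw.2.2.2.1, hw.2.2.1, hw.2.1]

theorem triangles_removeNode_of_degree_le_one {v : ℕ} (hv : G.degree v ≤ 1) :
    (G.removeNode v).triangles = G.triangles := by
  refine (triangles_mono (erase_subset _ _) (filter_subset _ _)).antisymm fun s hs => ?_
  obtain ⟨hsV, hcard, hadj⟩ := mem_triangles.1 hs
  have hvs : v ∉ s := by
    intro hvs
    obtain ⟨u, hu, w, hw, huw⟩ := one_lt_card.1 (show 1 < (s.erase v).card by
      rw [card_erase_of_mem hvs, hcard]; omega)
    have hedge : ∀ x ∈ s.erase v, s(v, x) ∈ G.edges.filter (v ∈ ·) := fun x hx =>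
      mem_filter.2 ⟨hadj v hvs x (mem_erase.1 hx).2 (mem_erase.1 hx).1.symm, Sym2.mem_mk_left v x⟩
    exact huw (Sym2.congr_right.1 (card_le_one.1 hv _ (hedge u hu) _ (hedge w hw)))
  refine mem_triangles.2 ⟨fun x hx => mem_erase.2 ⟨fun h => hvs (h ▸ hx), hsV hx⟩, hcard,
    fun u hu w hw huw => mem_filter.2 ⟨hadj u hu w hw huw, fun hv' => ?_⟩⟩
  rcases Sym2.mem_iff.1 hv' with rfl | rfl <;> contradiction

theorem degree_le_card_verts_sub_one (hG : G.Valid) (v : ℕ) :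
    G.degree v ≤ G.verts.card - 1 := by
  by_cases hv : v ∈ G.verts
  · rw [← card_erase_of_mem hv]
    calc G.degree v ≤ ((G.verts.erase v).image fun w => s(v, w)).card :=
          card_le_card fun e he => ?_
      _ ≤ _ := card_image_le
    obtain ⟨heE, hve⟩ := mem_filter.1 he
    obtain ⟨w, rfl⟩ := Sym2.mem_iff_exists.1 hve
    obtain ⟨hdiag, hends⟩ := hG _ heE
    exact mem_image.2 ⟨w, mem_erase.2 ⟨fun h => hdiag (Sym2.mk_isDiag_iff.2 h.symm),
      hends w (Sym2.mem_mk_right v w)⟩, rfl⟩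
  · have : G.degree v = 0 :=
      card_eq_zero.2 (filter_eq_empty_iff.2 fun e he hve => hv ((hG e he).2 v hve))
    omega

end FinGraph

namespace GraphStream

variable {S : GraphStream} {T : ℕ}

theorem flat_verts_mono (S : GraphStream) {s t : ℕ} (h : s ≤ t) :
    (S.flat s).verts ⊆ (S.flat t).verts :=
  biUnion_subset_biUnion_of_subset_left _ (range_subset_range.2 (by omega))

theorem flat_edges_mono (S : GraphStream) {s t : ℕ} (h : s ≤ t) :
    (S.flat s).edges ⊆ (S.flat t).edges :=
  biUnion_subset_biUnion_of_subset_left _ (range_subset_range.2 (by omega))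

theorem flat_removeEdge (S : GraphStream) (e : Sym2 ℕ) (t : ℕ) :
    (S.removeEdge e).flat t = (S.flat t).removeEdge e := by
  simp only [flat, removeEdge, FinGraph.removeEdge, FinGraph.mk.injEq, true_and]
  ext x
  simp only [mem_biUnion, mem_erase]
  tauto

theorem flat_removeNode (S : GraphStream) (v t : ℕ) :
    (S.removeNode v).flat t = (S.flat t).removeNode v := by
  simp only [flat, removeNode, FinGraph.removeNode, FinGraph.mk.injEq]
  constructor <;> ext x <;> simp only [mem_biUnion, mem_erase, mem_filter] <;> tauto

theorem Valid.flat_valid (hS : S.Valid T) (t : ℕ) : (S.flat t).Valid := by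
  intro e he
  obtain ⟨s, hs, hes⟩ := mem_biUnion.1 he
  obtain ⟨hdiag, hends⟩ := hS.2.2.2 s e hes
  refine ⟨hdiag, fun v hv => ?_⟩
  obtain ⟨r, hr, hvr⟩ := hends v hv
  exact mem_biUnion.2 ⟨r, by simp only [mem_range] at hs ⊢; omega, hvr⟩

theorem Valid.removeEdge (hS : S.Valid T) (e : Sym2 ℕ) : (S.removeEdge e).Valid T := by
  obtain ⟨htime, hnodes, hedges, hends⟩ := hS
  refine ⟨fun t ht => htime t ?_, hnodes, fun s t hst => ?_, fun t e' he' => ?_⟩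
  · exact ht.imp id fun ⟨e', he'⟩ => ⟨e', mem_of_mem_erase he'⟩
  · exact (hedges s t hst).mono (erase_subset _ _) (erase_subset _ _)
  · exact hends t e' (mem_of_mem_erase he')

def single (G : FinGraph) : GraphStream :=
  ⟨fun t => if t = 1 then G.verts else ∅, fun t => if t = 1 then G.edges else ∅⟩

theorem single_valid {G : FinGraph} (hG : G.Valid) : (single G).Valid 1 := by
  refine ⟨fun t ht => ?_, fun s t hst => ?_, fun s t hst => ?_, fun t e he => ?_⟩
  · by_contra h
    simp [single, show t ≠ 1 by omega] at ht
  · rcases eq_or_ne s 1 with rfl | hs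
    · simp [single, hst.symm]
    · simp [single, hs]
  · rcases eq_or_ne s 1 with rfl | hs
    · simp [single, hst.symm]
    · simp [single, hs]
  · by_cases ht : t = 1
    · subst ht
      obtain ⟨hdiag, hends⟩ := hG e (by simpa [single] using he)
      exact ⟨hdiag, fun v hv => ⟨1, le_rfl, by simpa [single] using hends v hv⟩⟩
    · simp [single, ht] at he

theorem flat_single_zero (G : FinGraph) : (single G).flat 0 = ⟨∅, ∅⟩ := by
  simp [single, flat]

theorem flat_single_one (G : FinGraph) : (single G).flat 1 = G := by
  simp [single, flat, range_add_one]

end GraphStream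

def incrementDist (f g : ℕ → ℤ) (T : ℕ) : ℤ :=
  ∑ t ∈ Icc 1 T, |(f t - f (t - 1)) - (g t - g (t - 1))|

theorem incrementDist_comm (f g : ℕ → ℤ) (T : ℕ) : incrementDist f g T = incrementDist g f T :=
  sum_congr rfl fun _ _ => abs_sub_comm _ _

theorem incrementDist_eq_of_monotone {f g : ℕ → ℤ} (h : Monotone fun t => f t - g t) (T : ℕ) :
    incrementDist f g T = (f T - g T) - (f 0 - g 0) := by
  induction T with
  | zero => simp [incrementDist]
  | succ n ih =>
    have hstep : f n - g n ≤ f (n + 1) - g (n + 1) := h n.le_succ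
    rw [incrementDist, sum_Icc_succ_top (by omega), ← incrementDist, ih, Nat.add_sub_cancel,
      abs_of_nonneg (by linarith)]
    ring

theorem incrementDist_eq_zero_of_eqOn {f g : ℕ → ℤ} {T : ℕ} (h : ∀ t ≤ T, f t = g t) :
    incrementDist f g T = 0 :=
  sum_eq_zero fun t ht => by
    rw [mem_Icc] at ht
    rw [h t ht.2, h (t - 1) (by omega), sub_self, abs_zero]

namespace GraphStream

variable {S : GraphStream} {T : ℕ}

noncomputable def triangleCounts (S : GraphStream) (t : ℕ) : ℤ := (S.flat t).triangleCount

theorem incrementDist_removeEdge (S : GraphStream) {a b : ℕ} (hab : a ≠ b) (T : ℕ) :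
    incrementDist S.triangleCounts (S.removeEdge s(a, b)).triangleCounts T =
      ((S.flat T).trianglesThrough a b).card - ((S.flat 0).trianglesThrough a b).card := by
  have hdiff : ∀ t, S.triangleCounts t - (S.removeEdge s(a, b)).triangleCounts t =
      ((S.flat t).trianglesThrough a b).card := fun t => by
    rw [triangleCounts, triangleCounts, flat_removeEdge,
      FinGraph.triangleCount_eq_removeEdge_add hab]
    push_cast
    ring
  rw [incrementDist_eq_of_monotone, hdiff, hdiff]
  intro s t hst
  simp only [hdiff, Nat.cast_le]
  exact card_le_card (FinGraph.trianglesThrough_mono (S.flat_verts_mono hst)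
    (S.flat_edges_mono hst))

theorem incrementDist_removeEdge_le {D : ℕ} (hS : S.Valid T)
    (hdeg : ∀ v, (S.flat T).degree v ≤ D) {t₀ : ℕ} {e : Sym2 ℕ} (he : e ∈ S.edges t₀) :
    incrementDist S.triangleCounts (S.removeEdge e).triangleCounts T ≤ D - 1 := by
  induction e using Sym2.ind with | _ a b => ?_
  have heT : s(a, b) ∈ (S.flat T).edges :=
    mem_biUnion.2 ⟨t₀, mem_range.2 (by have := (hS.1 t₀ (Or.inr ⟨_, he⟩)).2; omega), he⟩
  obtain ⟨hdiag, hends⟩ := hS.flat_valid T _ heT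
  have hab : a ≠ b := fun h => hdiag (Sym2.mk_isDiag_iff.2 h)
  have hcommon := FinGraph.card_commonNeighbors_add_one_le_degree heT
  rw [incrementDist_removeEdge S hab, FinGraph.card_trianglesThrough hab
    (hends a (Sym2.mem_mk_left a b)) (hends b (Sym2.mem_mk_right a b)) heT]
  have := hdeg a
  omega

theorem incrementDist_removeNode_eq_zero {v : ℕ} (hv : (S.flat T).degree v ≤ 1) :
    incrementDist S.triangleCounts (S.removeNode v).triangleCounts T = 0 :=
  incrementDist_eq_zero_of_eqOn fun t ht => by
    rw [triangleCounts, triangleCounts, flat_removeNode, FinGraph.triangleCount_eq_card_triangles,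
      FinGraph.triangleCount_eq_card_triangles,
      FinGraph.triangles_removeNode_of_degree_le_one
        ((FinGraph.degree_mono (S.flat_edges_mono ht) v).trans hv)]

theorem incrementDist_le_of_edgeRemovalStream {D : ℕ} (hD : 1 ≤ D) {S' : GraphStream}
    (hS : S.Valid T) (hSS' : edgeRemovalStream T S S') (hdeg : ∀ v, (S.flat T).degree v ≤ D) :
    incrementDist S.triangleCounts S'.triangleCounts T ≤ D - 1 := by
  rcases hSS' with ⟨t₀, e, he, rfl⟩ | ⟨v, -, hv, rfl⟩
  · exact incrementDist_removeEdge_le hS hdeg he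
  · rw [incrementDist_removeNode_eq_zero hv]
    omega

end GraphStream

def bookGraph (D : ℕ) : FinGraph :=
  ⟨range (D + 1), (range (D + 1)).sym2.filter fun e => ¬ e.IsDiag ∧ (0 ∈ e ∨ 1 ∈ e)⟩

theorem bookGraph_valid (D : ℕ) : (bookGraph D).Valid := fun e he => by
  simp only [bookGraph, mem_filter, mem_sym2_iff] at he
  exact ⟨he.2.1, he.1⟩

theorem commonNeighbors_bookGraph (D : ℕ) : (bookGraph D).commonNeighbors 0 1 = Icc 2 D := by
  ext w
  simp [FinGraph.commonNeighbors, bookGraph]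
  omega

open GraphStream in
theorem exists_incrementDist_eq {D : ℕ} (hD : 1 ≤ D) :
    ∃ S S' : GraphStream, S.Valid 1 ∧ S'.Valid 1 ∧ edgeNeighborStream 1 S S' ∧
      (∀ v, (S.flat 1).degree v ≤ D) ∧ (∀ v, (S'.flat 1).degree v ≤ D) ∧
      incrementDist S.triangleCounts S'.triangleCounts 1 = D - 1 := by
  have h01 : s(0, 1) ∈ (bookGraph D).edges := by simp [bookGraph]; omega
  have hdeg (v : ℕ) : (bookGraph D).degree v ≤ D := by
    simpa [bookGraph] using FinGraph.degree_le_card_verts_sub_one (bookGraph_valid D) v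
  refine ⟨single (bookGraph D), (single (bookGraph D)).removeEdge s(0, 1),
    single_valid (bookGraph_valid D), (single_valid (bookGraph_valid D)).removeEdge _,
    Or.inl (Or.inl ⟨1, s(0, 1), by simpa [single] using h01, rfl⟩),
    fun v => flat_single_one _ ▸ hdeg v, fun v => ?_, ?_⟩
  · rw [flat_removeEdge, flat_single_one]
    exact (FinGraph.degree_mono (erase_subset _ _) v).trans (hdeg v)
  · rw [incrementDist_removeEdge _ zero_ne_one, flat_single_one, flat_single_zero,
      FinGraph.card_trianglesThrough zero_ne_one (by simp [bookGraph])
        (by simp [bookGraph]; omega) h01,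
      commonNeighbors_bookGraph]
    have hempty : (⟨∅, ∅⟩ : FinGraph).triangles = ∅ := by
      simp [FinGraph.triangles, powersetCard_eq_empty.2 (show (∅ : Finset ℕ).card < 3 by simp)]
    simp [FinGraph.trianglesThrough, hempty]
    omega

/-- incremental edge-sensitivity of triangle counts.
For every pair of edge-neighboring insertion-only graph streams of length `T` whose
flattened graphs have maximum degree at most `D`, the ℓ₁ distance between the increment
sequences of the triangle counts is at most `D - 1`; moreover the bound is attained,
even by a pair of such streams of length `T = 1`. -/
theorem triangle_incremental_edge_sensitivity (D : ℕ) (hD : 1 ≤ D) :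
    (∀ (T : ℕ) (S S' : GraphStream), S.Valid T → S'.Valid T →
      edgeNeighborStream T S S' →
      (∀ v, (S.flat T).degree v ≤ D) → (∀ v, (S'.flat T).degree v ≤ D) →
      ∑ t ∈ Finset.Icc 1 T,
          |(((S.flat t).triangleCount : ℤ) - ((S.flat (t - 1)).triangleCount : ℤ))
            - (((S'.flat t).triangleCount : ℤ)
                - ((S'.flat (t - 1)).triangleCount : ℤ))| ≤ (D : ℤ) - 1) ∧
    (∃ S S' : GraphStream, S.Valid 1 ∧ S'.Valid 1 ∧ edgeNeighborStream 1 S S' ∧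
      (∀ v, (S.flat 1).degree v ≤ D) ∧ (∀ v, (S'.flat 1).degree v ≤ D) ∧
      ∑ t ∈ Finset.Icc 1 1,
          |(((S.flat t).triangleCount : ℤ) - ((S.flat (t - 1)).triangleCount : ℤ))
            - (((S'.flat t).triangleCount : ℤ)
                - ((S'.flat (t - 1)).triangleCount : ℤ))| = (D : ℤ) - 1) := by
  refine ⟨fun T S S' hS hS' hSS' hdeg hdeg' => ?_, exists_incrementDist_eq hD⟩
  change incrementDist S.triangleCounts S'.triangleCounts T ≤ D - 1
  rcases hSS' with h | h
  · exact GraphStream.incrementDist_le_of_edgeRemovalStream hD hS h hdeg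
  · rw [incrementDist_comm]
    exact GraphStream.incrementDist_le_of_edgeRemovalStream hD hS' h hdeg'
end
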